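/- arXiv:2411.05249 — 2 statements merged into one kernel-verified Lean document; each statement's English description precedes it below -/
import Mathlib

section
/- Let E be a real inner product space (e.g. ℝ^d with the Euclidean inner product). There exists a constant C₁ > 0 (one may take C₁ = 1/2) such that for all a, b ∈ E, ⟨‖a‖·a − ‖b‖·b, a − b⟩ ≥ C₁ · ‖a − b‖³. -/
/-!
Expanding with `2⟪a, b⟫ = ‖a‖² + ‖b‖² - ‖a - b‖²` gives the identity
`⟪‖a‖ a - ‖b‖ b, a - b⟫ = (‖a‖ + ‖b‖) (‖a - b‖² + (‖a‖ - ‖b‖)²) / 2`,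
and the triangle inequality `‖a - b‖ ≤ ‖a‖ + ‖b‖` bounds the right side below by `‖a - b‖³ / 2`.
-/

section

variable {E : Type*} [NormedAddCommGroup E] [InnerProductSpace ℝ E]

theorem inner_norm_smul_sub_norm_smul_sub_eq (a b : E) :
    inner ℝ (‖a‖ • a - ‖b‖ • b) (a - b) =
      (‖a‖ + ‖b‖) / 2 * (‖a - b‖ ^ 2 + (‖a‖ - ‖b‖) ^ 2) := by
  rw [norm_sub_sq_real]
  simp only [inner_sub_left, inner_sub_right, real_inner_smul_left,
    real_inner_self_eq_norm_sq, real_inner_comm b a]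
  ring

theorem half_mul_norm_sub_pow_three_le_inner_norm_smul_sub (a b : E) :
    1 / 2 * ‖a - b‖ ^ 3 ≤ inner ℝ (‖a‖ • a - ‖b‖ • b) (a - b) := by
  rw [inner_norm_smul_sub_norm_smul_sub_eq]
  calc 1 / 2 * ‖a - b‖ ^ 3 = ‖a - b‖ / 2 * ‖a - b‖ ^ 2 := by ring
    _ ≤ (‖a‖ + ‖b‖) / 2 * ‖a - b‖ ^ 2 := by gcongr; exact norm_sub_le a b
    _ ≤ (‖a‖ + ‖b‖) / 2 * (‖a - b‖ ^ 2 + (‖a‖ - ‖b‖) ^ 2) := by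
      gcongr
      exact le_add_of_nonneg_right (sq_nonneg _)

end

/-- Pointwise strong monotonicity of the Smagorinsky nonlinearity `a ↦ ‖a‖ • a`:
in any real inner product space there is a constant `C₁ > 0` (one may take `C₁ = 1/2`)
such that `⟨‖a‖·a − ‖b‖·b, a − b⟩ ≥ C₁ ‖a − b‖³` for all `a, b`. -/
theorem pointwise_strong_monotonicity
    (E : Type*) [NormedAddCommGroup E] [InnerProductSpace ℝ E] :
    ∃ C₁ : ℝ, 0 < C₁ ∧
      ∀ a b : E,
        C₁ * ‖a - b‖ ^ 3 ≤ (inner ℝ (‖a‖ • a - ‖b‖ • b) (a - b) : ℝ) :=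
  ⟨1 / 2, one_half_pos, half_mul_norm_sub_pow_three_le_inner_norm_smul_sub⟩
end

section
/- Let (Ω, μ) be a measure space and let f, g, h : Ω → ℝ^d be strongly measurable functions with ∫ ‖f‖³ dμ < ∞, ∫ ‖g‖³ dμ < ∞ and ∫ ‖h‖³ dμ < ∞. Then ∫ ⟨‖f(x)‖·f(x) − ‖g(x)‖·g(x), h(x)⟩ dμ(x) ≤ 2 · r · ‖f − g‖_{L³(μ)} · ‖h‖_{L³(μ)}, where r = max( ‖f‖_{L³(μ)}, ‖g‖_{L³(μ)} ) and ‖h‖_{L³(μ)} = (∫ ‖h(x)‖³ dμ(x))^{1/3}. -/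
/-!
Pointwise, `‖u‖ • u - ‖v‖ • v = ‖u‖ • (u - v) + (‖u‖ - ‖v‖) • v` has norm at most
`(‖u‖ + ‖v‖) * ‖u - v‖`, so by Cauchy–Schwarz the integrand is bounded by
`‖f‖ ‖f - g‖ ‖h‖ + ‖g‖ ‖f - g‖ ‖h‖`. Hölder's inequality with exponents `(3, 3, 3)` bounds the
integral of each summand by a product of three `L³` norms, and both first factors are at most `r`.
-/

open MeasureTheory

section Holder

variable {α ι : Type*} [MeasurableSpace α] {μ : Measure α} {s : Finset ι}
  {f : ι → α → ℝ} {p : ι → ℝ}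

theorem lintegral_ofReal_prod_le_prod_integral_rpow (hp : ∀ i ∈ s, 0 < p i)
    (hps : ∑ i ∈ s, (p i)⁻¹ = 1) (hf : ∀ i ∈ s, ∀ x, 0 ≤ f i x)
    (hfp : ∀ i ∈ s, Integrable (fun x => f i x ^ p i) μ) :
    ∫⁻ x, ENNReal.ofReal (∏ i ∈ s, f i x) ∂μ ≤
      ENNReal.ofReal (∏ i ∈ s, (∫ x, f i x ^ p i ∂μ) ^ (p i)⁻¹) := by
  have hinv : ∀ i ∈ s, 0 ≤ (p i)⁻¹ := fun i hi => (inv_pos.2 (hp i hi)).le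
  calc ∫⁻ x, ENNReal.ofReal (∏ i ∈ s, f i x) ∂μ
      = ∫⁻ x, ∏ i ∈ s, ENNReal.ofReal (f i x ^ p i) ^ (p i)⁻¹ ∂μ := by
        refine lintegral_congr fun x => ?_
        rw [ENNReal.ofReal_prod_of_nonneg fun i hi => hf i hi x]
        refine Finset.prod_congr rfl fun i hi => ?_
        rw [ENNReal.ofReal_rpow_of_nonneg (Real.rpow_nonneg (hf i hi x) _) (hinv i hi),
          Real.rpow_rpow_inv (hf i hi x) (hp i hi).ne']
    _ ≤ ∏ i ∈ s, (∫⁻ x, ENNReal.ofReal (f i x ^ p i) ∂μ) ^ (p i)⁻¹ :=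
        ENNReal.lintegral_prod_norm_pow_le s
          (fun i hi => (hfp i hi).aemeasurable.ennreal_ofReal) hps hinv
    _ = ENNReal.ofReal (∏ i ∈ s, (∫ x, f i x ^ p i ∂μ) ^ (p i)⁻¹) := by
        have hint : ∀ i ∈ s, 0 ≤ ∫ x, f i x ^ p i ∂μ := fun i hi =>
          integral_nonneg fun x => Real.rpow_nonneg (hf i hi x) _
        rw [ENNReal.ofReal_prod_of_nonneg fun i hi => Real.rpow_nonneg (hint i hi) _]
        refine Finset.prod_congr rfl fun i hi => ?_
        rw [← ofReal_integral_eq_lintegral_ofReal (hfp i hi)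
            (Filter.Eventually.of_forall fun x => Real.rpow_nonneg (hf i hi x) _),
          ENNReal.ofReal_rpow_of_nonneg (hint i hi) (hinv i hi)]

theorem integrable_prod_of_integrable_rpow (hp : ∀ i ∈ s, 0 < p i)
    (hps : ∑ i ∈ s, (p i)⁻¹ = 1) (hf : ∀ i ∈ s, ∀ x, 0 ≤ f i x)
    (hfp : ∀ i ∈ s, Integrable (fun x => f i x ^ p i) μ) :
    Integrable (fun x => ∏ i ∈ s, f i x) μ := by
  have hmeas : ∀ i ∈ s, AEStronglyMeasurable (f i) μ := fun i hi => by
    have h := ((hfp i hi).aemeasurable.pow_const (p i)⁻¹).aestronglyMeasurable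
    simpa only [Real.rpow_rpow_inv (hf i hi _) (hp i hi).ne'] using h
  refine ⟨Finset.aestronglyMeasurable_fun_prod s hmeas, ?_⟩
  rw [hasFiniteIntegral_iff_ofReal
    (Filter.Eventually.of_forall fun x => Finset.prod_nonneg fun i hi => hf i hi x)]
  exact (lintegral_ofReal_prod_le_prod_integral_rpow hp hps hf hfp).trans_lt
    ENNReal.ofReal_lt_top

theorem integral_prod_le_prod_integral_rpow (hp : ∀ i ∈ s, 0 < p i)
    (hps : ∑ i ∈ s, (p i)⁻¹ = 1) (hf : ∀ i ∈ s, ∀ x, 0 ≤ f i x)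
    (hfp : ∀ i ∈ s, Integrable (fun x => f i x ^ p i) μ) :
    ∫ x, ∏ i ∈ s, f i x ∂μ ≤ ∏ i ∈ s, (∫ x, f i x ^ p i ∂μ) ^ (p i)⁻¹ := by
  rw [integral_eq_lintegral_of_nonneg_ae
    (Filter.Eventually.of_forall fun x => Finset.prod_nonneg fun i hi => hf i hi x)
    (integrable_prod_of_integrable_rpow hp hps hf hfp).aestronglyMeasurable]
  exact ENNReal.toReal_le_of_le_ofReal
    (Finset.prod_nonneg fun i hi =>
      Real.rpow_nonneg (integral_nonneg fun x => Real.rpow_nonneg (hf i hi x) _) _)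
    (lintegral_ofReal_prod_le_prod_integral_rpow hp hps hf hfp)

end Holder

section HolderThree

variable {α : Type*} [MeasurableSpace α] {μ : Measure α} {a b c : α → ℝ}

theorem integrable_mul_mul_of_integrable_pow_three (ha : ∀ x, 0 ≤ a x) (hb : ∀ x, 0 ≤ b x)
    (hc : ∀ x, 0 ≤ c x) (ha3 : Integrable (fun x => a x ^ 3) μ)
    (hb3 : Integrable (fun x => b x ^ 3) μ) (hc3 : Integrable (fun x => c x ^ 3) μ) :
    Integrable (fun x => a x * b x * c x) μ := by
  have := integrable_prod_of_integrable_rpow (μ := μ) (s := Finset.univ) (f := ![a, b, c])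
    (p := fun _ => 3) (by norm_num) (by norm_num) (by simp [Fin.forall_fin_succ, *])
    (by simp [Fin.forall_fin_succ, Real.rpow_ofNat, *])
  simpa [Fin.prod_univ_three, mul_assoc] using this

theorem integral_mul_mul_le_of_integrable_pow_three (ha : ∀ x, 0 ≤ a x) (hb : ∀ x, 0 ≤ b x)
    (hc : ∀ x, 0 ≤ c x) (ha3 : Integrable (fun x => a x ^ 3) μ)
    (hb3 : Integrable (fun x => b x ^ 3) μ) (hc3 : Integrable (fun x => c x ^ 3) μ) :
    ∫ x, a x * b x * c x ∂μ ≤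
      (∫ x, a x ^ 3 ∂μ) ^ ((1 : ℝ) / 3) * (∫ x, b x ^ 3 ∂μ) ^ ((1 : ℝ) / 3) *
        (∫ x, c x ^ 3 ∂μ) ^ ((1 : ℝ) / 3) := by
  have := integral_prod_le_prod_integral_rpow (μ := μ) (s := Finset.univ) (f := ![a, b, c])
    (p := fun _ => 3) (by norm_num) (by norm_num) (by simp [Fin.forall_fin_succ, *])
    (by simp [Fin.forall_fin_succ, Real.rpow_ofNat, *])
  simpa [Fin.prod_univ_three, Real.rpow_ofNat, mul_assoc] using this

end HolderThree

theorem norm_norm_smul_sub_norm_smul_le {E : Type*} [SeminormedAddCommGroup E]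
    [NormedSpace ℝ E] (u v : E) : ‖‖u‖ • u - ‖v‖ • v‖ ≤ (‖u‖ + ‖v‖) * ‖u - v‖ := by
  have hsplit : ‖u‖ • u - ‖v‖ • v = ‖u‖ • (u - v) + (‖u‖ - ‖v‖) • v := by
    rw [smul_sub, sub_smul]; abel
  calc ‖‖u‖ • u - ‖v‖ • v‖
      ≤ ‖u‖ * ‖u - v‖ + |‖u‖ - ‖v‖| * ‖v‖ := by
        rw [hsplit]
        refine (norm_add_le _ _).trans_eq ?_
        rw [norm_smul, norm_smul, Real.norm_eq_abs, Real.norm_eq_abs, abs_norm]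
    _ ≤ ‖u‖ * ‖u - v‖ + ‖u - v‖ * ‖v‖ := by gcongr; exact abs_norm_sub_norm_le u v
    _ = (‖u‖ + ‖v‖) * ‖u - v‖ := by ring

theorem memLp_natCast_iff_integrable_norm_pow {α E : Type*} [MeasurableSpace α]
    {μ : Measure α} [NormedAddCommGroup E] {u : α → E} (hu : AEStronglyMeasurable u μ) {n : ℕ}
    (hn : n ≠ 0) : MemLp u n μ ↔ Integrable (fun x => ‖u x‖ ^ n) μ := by
  rw [← integrable_norm_rpow_iff hu (by exact_mod_cast hn) (by simp)]
  simp

theorem local_lipschitz_L3_general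
    {Ω : Type*} [MeasurableSpace Ω] (μ : Measure Ω) (d : ℕ)
    (f g h : Ω → EuclideanSpace ℝ (Fin d))
    (hf : StronglyMeasurable f) (hg : StronglyMeasurable g)
    (hf3 : Integrable (fun x => ‖f x‖ ^ 3) μ)
    (hg3 : Integrable (fun x => ‖g x‖ ^ 3) μ)
    (hh3 : Integrable (fun x => ‖h x‖ ^ 3) μ) :
    ∫ x, (inner ℝ (‖f x‖ • f x - ‖g x‖ • g x) (h x) : ℝ) ∂μ ≤
      2 * max ((∫ x, ‖f x‖ ^ 3 ∂μ) ^ ((1 : ℝ) / 3)) ((∫ x, ‖g x‖ ^ 3 ∂μ) ^ ((1 : ℝ) / 3)) *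
        (∫ x, ‖f x - g x‖ ^ 3 ∂μ) ^ ((1 : ℝ) / 3) *
        (∫ x, ‖h x‖ ^ 3 ∂μ) ^ ((1 : ℝ) / 3) := by
  have hfg3 : Integrable (fun x => ‖f x - g x‖ ^ 3) μ := by
    have hfL := (memLp_natCast_iff_integrable_norm_pow hf.aestronglyMeasurable three_ne_zero).2 hf3
    have hgL := (memLp_natCast_iff_integrable_norm_pow hg.aestronglyMeasurable three_ne_zero).2 hg3
    exact (hfL.sub hgL).integrable_norm_pow three_ne_zero
  have hpt : ∀ x, (inner ℝ (‖f x‖ • f x - ‖g x‖ • g x) (h x) : ℝ) ≤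
      ‖f x‖ * ‖f x - g x‖ * ‖h x‖ + ‖g x‖ * ‖f x - g x‖ * ‖h x‖ := fun x =>
    calc (inner ℝ (‖f x‖ • f x - ‖g x‖ • g x) (h x) : ℝ)
        ≤ ‖‖f x‖ • f x - ‖g x‖ • g x‖ * ‖h x‖ := real_inner_le_norm _ _
      _ ≤ (‖f x‖ + ‖g x‖) * ‖f x - g x‖ * ‖h x‖ := by
          gcongr; exact norm_norm_smul_sub_norm_smul_le _ _
      _ = _ := by ring
  have hF := integrable_mul_mul_of_integrable_pow_three (fun _ => norm_nonneg _)
    (fun _ => norm_nonneg _) (fun _ => norm_nonneg _) hf3 hfg3 hh3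
  have hG := integrable_mul_mul_of_integrable_pow_three (fun _ => norm_nonneg _)
    (fun _ => norm_nonneg _) (fun _ => norm_nonneg _) hg3 hfg3 hh3
  by_cases hφ : Integrable (fun x => (inner ℝ (‖f x‖ • f x - ‖g x‖ • g x) (h x) : ℝ)) μ
  swap
  · rw [integral_undef hφ]; positivity
  calc ∫ x, (inner ℝ (‖f x‖ • f x - ‖g x‖ • g x) (h x) : ℝ) ∂μ
      ≤ ∫ x, (‖f x‖ * ‖f x - g x‖ * ‖h x‖ + ‖g x‖ * ‖f x - g x‖ * ‖h x‖) ∂μ :=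
        integral_mono hφ (hF.add hG) hpt
    _ = (∫ x, ‖f x‖ * ‖f x - g x‖ * ‖h x‖ ∂μ) + ∫ x, ‖g x‖ * ‖f x - g x‖ * ‖h x‖ ∂μ :=
        integral_add hF hG
    _ ≤ _ := by
        grw [integral_mul_mul_le_of_integrable_pow_three (fun _ => norm_nonneg _)
            (fun _ => norm_nonneg _) (fun _ => norm_nonneg _) hf3 hfg3 hh3,
          integral_mul_mul_le_of_integrable_pow_three (fun _ => norm_nonneg _)
            (fun _ => norm_nonneg _) (fun _ => norm_nonneg _) hg3 hfg3 hh3,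
          two_mul, add_mul, add_mul]
        gcongr
        exacts [le_max_left _ _, le_max_right _ _]

/-- Local Lipschitz continuity (LLC) of the Smagorinsky nonlinearity in `L³`:
for `f, g, h ∈ L³(μ; ℝ^d)`,
`∫ ⟨‖f‖·f − ‖g‖·g, h⟩ dμ ≤ 2 r ‖f − g‖_{L³} ‖h‖_{L³}`,
where `r = max(‖f‖_{L³}, ‖g‖_{L³})`. -/
theorem local_lipschitz_L3
    {Ω : Type*} [MeasurableSpace Ω] (μ : Measure Ω) (d : ℕ)
    (f g h : Ω → EuclideanSpace ℝ (Fin d))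
    (hf : StronglyMeasurable f) (hg : StronglyMeasurable g) (hh : StronglyMeasurable h)
    (hf3 : Integrable (fun x => ‖f x‖ ^ 3) μ)
    (hg3 : Integrable (fun x => ‖g x‖ ^ 3) μ)
    (hh3 : Integrable (fun x => ‖h x‖ ^ 3) μ) :
    ∫ x, (inner ℝ (‖f x‖ • f x - ‖g x‖ • g x) (h x) : ℝ) ∂μ ≤
      2 * max ((∫ x, ‖f x‖ ^ 3 ∂μ) ^ ((1 : ℝ) / 3)) ((∫ x, ‖g x‖ ^ 3 ∂μ) ^ ((1 : ℝ) / 3)) *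
        (∫ x, ‖f x - g x‖ ^ 3 ∂μ) ^ ((1 : ℝ) / 3) *
        (∫ x, ‖h x‖ ^ 3 ∂μ) ^ ((1 : ℝ) / 3) :=
  local_lipschitz_L3_general μ d f g h hf hg hf3 hg3 hh3
end
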